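/- A graph G is a midpoint unit double approval graph if and only if G is a unit interval graph. Concretely, mapping each midpoint unit approval interval (a, a+c, a+2c) to the interval (a+c/2, a+3c/2) preserves adjacency: (a, a+c, a+2c) and (b, b+c, b+2c) are double-approval-adjacent iff (a+c/2, a+3c/2) and (b+c/2, b+3c/2) intersect. -/
import Mathlib


/-- An approval interval: a closed interval `[l, r]` with an approval mark
`a`, `l < a < r`. -/
structure ApprovalInterval where
  l : ℝ
  a : ℝ
  r : ℝ
  hla : l < a
  har : a < r

/-- The intervals of `x` and `y` intersect. -/
def AIntersect (x y : ApprovalInterval) : Prop :=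
  y.l ≤ x.r ∧ x.l ≤ y.r

/-- Single approval adjacency: the intervals intersect and the intersection
contains exactly one of the two approval marks. -/
def SAAdj (x y : ApprovalInterval) : Prop :=
  AIntersect x y ∧
    Xor' (y.l ≤ x.a ∧ x.a ≤ y.r) (x.l ≤ y.a ∧ y.a ≤ x.r)

/-- Double approval adjacency: the intervals intersect and the intersection
contains both approval marks. -/
def DAAdj (x y : ApprovalInterval) : Prop :=
  AIntersect x y ∧ (y.l ≤ x.a ∧ x.a ≤ y.r) ∧ (x.l ≤ y.a ∧ y.a ≤ x.r)

/-- `G` is a single approval graph. -/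
def IsSAGraph {V : Type*} (G : SimpleGraph V) : Prop :=
  ∃ f : V → ApprovalInterval, ∀ a b : V, G.Adj a b ↔ SAAdj (f a) (f b)

/-- `G` is a double approval graph. -/
def IsDAGraph {V : Type*} (G : SimpleGraph V) : Prop :=
  ∃ f : V → ApprovalInterval, ∀ a b : V, G.Adj a b ↔ a ≠ b ∧ DAAdj (f a) (f b)

/-- `G` is a midpoint unit double approval graph: all intervals have the same
length and each approval mark is the midpoint of its interval. -/
def IsMUDAGraph {V : Type*} (G : SimpleGraph V) : Prop :=
  ∃ f : V → ApprovalInterval,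
    (∀ a b : V, G.Adj a b ↔ a ≠ b ∧ DAAdj (f a) (f b)) ∧
    (∀ a b : V, (f a).r - (f a).l = (f b).r - (f b).l) ∧
    (∀ a : V, (f a).a = ((f a).l + (f a).r) / 2)

/-- `G` is a unit interval graph: the intersection graph of unit-length
closed intervals. -/
def IsUnitIntervalGraph {V : Type*} (G : SimpleGraph V) : Prop :=
  ∃ lo : V → ℝ, ∀ a b : V, G.Adj a b ↔ a ≠ b ∧ |lo a - lo b| ≤ 1

/-- A graph is a midpoint unit double approval graph iff it is a unit
interval graph; concretely, mapping each midpoint unit approval interval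
`(a, a+c, a+2c)` to `(a+c/2, a+3c/2)` preserves adjacency. -/
theorem stmt_19 {V : Type*} (G : SimpleGraph V) :
    (IsMUDAGraph G ↔ IsUnitIntervalGraph G) ∧
    (∀ (a b c : ℝ) (h : 0 < c),
      DAAdj ⟨a, a + c, a + 2 * c, by linarith, by linarith⟩
            ⟨b, b + c, b + 2 * c, by linarith, by linarith⟩ ↔
      (b + c / 2 ≤ a + 3 * c / 2 ∧ a + c / 2 ≤ b + 3 * c / 2)) := by
  constructor
  · constructor
    · rintro ⟨f, hadj, hlen, hmid⟩
      refine ⟨fun v => 2 * (f v).l / ((f v).r - (f v).l), fun a b => ?_⟩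
      rw [hadj a b]
      have hLpos : ∀ v : V, (0:ℝ) < (f v).r - (f v).l := fun v => by
        have h1 := (f v).hla; have h2 := (f v).har; linarith
      have hL : (f b).r - (f b).l = (f a).r - (f a).l := hlen b a
      set L := (f a).r - (f a).l with hLdef
      have hLpa : (0:ℝ) < L := hLpos a
      have hdiv : 2 * (f a).l / L - 2 * (f b).l / L = (2 * (f a).l - 2 * (f b).l) / L := by
        ring
      have key : DAAdj (f a) (f b) ↔ |2 * (f a).l / L - 2 * (f b).l / ((f b).r - (f b).l)| ≤ 1 := by
        rw [hL, hdiv, abs_div, abs_of_pos hLpa, div_le_one hLpa, abs_le]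
        have hma := hmid a; have hmb := hmid b
        have hra : (f a).r = (f a).l + L := by rw [hLdef]; ring
        have hrb : (f b).r = (f b).l + L := by
          have := hlen b a; linarith
        constructor
        · rintro ⟨⟨h1, h2⟩, ⟨h3, h4⟩, ⟨h5, h6⟩⟩
          constructor <;> nlinarith
        · rintro ⟨h1, h2⟩
          refine ⟨⟨?_, ?_⟩, ⟨?_, ?_⟩, ⟨?_, ?_⟩⟩ <;> nlinarith
      rw [key]
    · rintro ⟨lo, hadj⟩
      refine ⟨fun v => ⟨lo v, lo v + 1, lo v + 2, by linarith, by linarith⟩,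
        fun a b => ?_, fun a b => by norm_num, fun a => by norm_num; ring⟩
      rw [hadj a b]
      unfold DAAdj AIntersect
      simp only
      rw [abs_le]
      constructor
      · rintro ⟨hab, h1, h2⟩
        refine ⟨hab, ⟨?_, ?_⟩, ⟨?_, ?_⟩, ⟨?_, ?_⟩⟩ <;> linarith
      · rintro ⟨hab, ⟨h1, h2⟩, ⟨h3, h4⟩, h5, h6⟩
        refine ⟨hab, ?_, ?_⟩ <;> linarith
  · intro a b c h
    unfold DAAdj AIntersect
    simp only
    constructor
    · rintro ⟨⟨h1, h2⟩, ⟨h3, h4⟩, h5, h6⟩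
      constructor <;> linarith
    · rintro ⟨h1, h2⟩
      refine ⟨⟨?_, ?_⟩, ⟨?_, ?_⟩, ?_, ?_⟩ <;> linarith
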